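/- arXiv:math/0703826 — 5 statements merged into one kernel-verified Lean document; each statement's English description precedes it below -/
import Mathlib

section
/- Let n ≥ 2 and define the n×n complex matrix Λ by Λ_{j,k} = (cot(π(j-k+1/2)/n) - cot(π(j-k-1/2)/n))/n, for 1 ≤ j,k ≤ n. Then for each 1 ≤ k ≤ n, the vector v_k with components (v_k)_j = exp(2πijk/n) satisfies Λ v_k = 2 sin(πk/n) · v_k. -/
open Finset Complex

namespace Stmt3Aux

noncomputable def ε (n : ℕ) : ℂ := Complex.exp (Real.pi * Complex.I / n)

lemma eps_ne (n : ℕ) : ε n ≠ 0 := Complex.exp_ne_zero _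

lemma eps_zpow (n : ℕ) (x : ℤ) : ε n ^ x = Complex.exp (Real.pi * Complex.I * x / n) := by
  rw [ε, ← Complex.exp_int_mul]; congr 1; ring

lemma eps_add (n : ℕ) (x y : ℤ) : ε n ^ (x + y) = ε n ^ x * ε n ^ y := zpow_add₀ (eps_ne n) x y

lemma eps_n {n : ℕ} (hn : 0 < n) : ε n ^ (n : ℤ) = -1 := by
  have hne : (n : ℂ) ≠ 0 := Nat.cast_ne_zero.mpr hn.ne'
  rw [eps_zpow, show (Real.pi * Complex.I * ((n:ℤ):ℂ) / n : ℂ) = Real.pi * Complex.I by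
    push_cast; field_simp]
  exact Complex.exp_pi_mul_I

lemma eps_odd_mul_n {n : ℕ} (hn : 0 < n) {c : ℤ} (hc : Odd c) : ε n ^ (c * n) = -1 := by
  rw [mul_comm, zpow_mul, eps_n hn, hc.neg_one_zpow]

lemma eps_even_mul_n {n : ℕ} (hn : 0 < n) (a : ℤ) : ε n ^ (2 * n * a) = 1 := by
  rw [zpow_mul, show (2 * (n:ℤ)) = (n:ℤ) * 2 by ring, zpow_mul, eps_n hn]
  norm_num

lemma eps_eq_one {n : ℕ} (hn : 0 < n) {a : ℤ} : ε n ^ (2 * a) = 1 ↔ (n : ℤ) ∣ a := by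
  have hne : (n : ℂ) ≠ 0 := Nat.cast_ne_zero.mpr hn.ne'
  constructor
  · intro h
    rw [eps_zpow, Complex.exp_eq_one_iff] at h
    obtain ⟨m, hm⟩ := h
    have hπ : (Real.pi : ℂ) ≠ 0 := Complex.ofReal_ne_zero.mpr Real.pi_ne_zero
    push_cast at hm
    field_simp at hm
    have h2 : (2 * (Real.pi : ℂ) * Complex.I) * (a : ℂ)
        = (2 * (Real.pi : ℂ) * Complex.I) * ((n : ℂ) * m) := by
      linear_combination (2 * (Real.pi : ℂ) * Complex.I) * hm
    have h3 := mul_left_cancel₀ (by simp [hπ, Complex.I_ne_zero] : (2 * (Real.pi : ℂ) * Complex.I) ≠ 0) h2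
    exact ⟨m, by exact_mod_cast h3⟩
  · rintro ⟨b, rfl⟩
    rw [show (2 * ((n:ℤ) * b)) = 2 * n * b by ring]
    exact eps_even_mul_n hn b

lemma geom {n : ℕ} (hn : 0 < n) (a : ℤ) :
    ∑ m ∈ range n, ε n ^ (2 * a * (m : ℤ)) = if (n : ℤ) ∣ a then (n : ℂ) else 0 := by
  have hw : ∀ m : ℕ, ε n ^ (2 * a * (m : ℤ)) = (ε n ^ (2 * a)) ^ m := by
    intro m; rw [zpow_mul, zpow_natCast]
  simp only [hw]
  by_cases h : (n : ℤ) ∣ a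
  · rw [if_pos h, (eps_eq_one hn).mpr h]
    simp
  · rw [if_neg h]
    have hw1 : ε n ^ (2 * a) ≠ 1 := fun hc => h ((eps_eq_one hn).mp hc)
    rw [geom_sum_eq hw1, ← zpow_natCast (ε n ^ (2*a)), ← zpow_mul,
      show (2 * a * (n:ℤ)) = 2 * n * a by ring, eps_even_mul_n hn]
    simp

lemma cot_eq {n : ℕ} (hn : 0 < n) (c : ℤ) (hc : Odd c) :
    ((Real.cot (Real.pi * c / (2 * n)) : ℝ) : ℂ) =
      -Complex.I / 2 * ((ε n ^ c + 1) * ∑ t ∈ range n, (ε n ^ c) ^ t) := by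
  have hne : (n : ℂ) ≠ 0 := Nat.cast_ne_zero.mpr hn.ne'
  rw [Complex.ofReal_cot, Complex.cot_eq_exp_ratio]
  have hq : Complex.exp (2 * Complex.I * ((Real.pi * c / (2 * n) : ℝ) : ℂ)) = ε n ^ c := by
    rw [eps_zpow]; congr 1; push_cast; field_simp
  rw [hq]
  have hS : (∑ t ∈ range n, (ε n ^ c) ^ t) * (ε n ^ c - 1) = -2 := by
    rw [geom_sum_mul, ← zpow_natCast (ε n ^ c), ← zpow_mul, eps_odd_mul_n hn hc]
    norm_num
  have h1 : ε n ^ c ≠ 1 := by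
    intro h
    rw [h, sub_self, mul_zero] at hS
    norm_num at hS
  have hden : Complex.I * (1 - ε n ^ c) ≠ 0 :=
    mul_ne_zero Complex.I_ne_zero (sub_ne_zero.mpr (Ne.symm h1))
  rw [div_eq_iff hden]
  linear_combination ((ε n ^ c + 1) / 2) * hS +
    ((ε n ^ c + 1) * (∑ t ∈ range n, (ε n ^ c) ^ t) * (1 - ε n ^ c) / 2) * Complex.I_sq

lemma expand {n : ℕ} (c M : ℤ) :
    (ε n ^ c + 1) * (∑ t ∈ range n, (ε n ^ c) ^ t) * ε n ^ (2 * M) =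
      ∑ t ∈ range n, (ε n ^ (c * ((t : ℤ) + 1) + 2 * M) + ε n ^ (c * (t : ℤ) + 2 * M)) := by
  rw [Finset.mul_sum, Finset.sum_mul]
  refine Finset.sum_congr rfl fun t ht => ?_
  have h1 : (ε n ^ c) ^ t = ε n ^ (c * (t : ℤ)) := by rw [zpow_mul, zpow_natCast]
  rw [h1, show c * ((t : ℤ) + 1) + 2 * M = c + (c * t + 2 * M) by ring, eps_add, eps_add]
  ring

end Stmt3Aux

theorem stmt_3 (n : ℕ) (hn : 2 ≤ n)
    (Λ : Matrix (Fin n) (Fin n) ℂ)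
    (hΛ : ∀ j k : Fin n, Λ j k =
      (((Real.cot (Real.pi * ((j.1 + 1 : ℝ) - (k.1 + 1) + 1 / 2) / n)
        - Real.cot (Real.pi * ((j.1 + 1 : ℝ) - (k.1 + 1) - 1 / 2) / n)) / n : ℝ) : ℂ))
    (k : Fin n) (v : Fin n → ℂ)
    (hv : ∀ j : Fin n, v j =
      Complex.exp (2 * Real.pi * Complex.I * (j.1 + 1) * (k.1 + 1) / n)) :
    Λ.mulVec v = ((2 * Real.sin (Real.pi * (k.1 + 1) / n) : ℝ) : ℂ) • v := by
  have hn0 : 0 < n := by omega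
  have hnC : (n : ℂ) ≠ 0 := Nat.cast_ne_zero.mpr hn0.ne'
  funext j
  set E := Stmt3Aux.ε n with hE
  set J : ℤ := (j.1 : ℤ) with hJ
  set K : ℤ := (k.1 : ℤ) + 1 with hKdef
  have key : ∀ m : Fin n, Λ j m * v m =
      1/(n:ℂ) * (-Complex.I/2) * ∑ t ∈ range n,
        (E ^ ((2*J+1)*((t:ℤ)+1) + 2*K) * E ^ (2*(K-(t:ℤ)-1)*(m.1:ℤ))
         + E ^ ((2*J+1)*(t:ℤ) + 2*K) * E ^ (2*(K-(t:ℤ))*(m.1:ℤ))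
         - E ^ ((2*J-1)*((t:ℤ)+1) + 2*K) * E ^ (2*(K-(t:ℤ)-1)*(m.1:ℤ))
         - E ^ ((2*J-1)*(t:ℤ) + 2*K) * E ^ (2*(K-(t:ℤ))*(m.1:ℤ))) := by
    intro m
    simp only [hE]
    have harg1 : Real.pi * ((j.1 + 1 : ℝ) - (m.1 + 1) + 1 / 2) / n
        = Real.pi * ((2*(J - (m.1:ℤ)) + 1 : ℤ) : ℝ) / (2*n) := by rw [hJ]; push_cast; ring
    have harg2 : Real.pi * ((j.1 + 1 : ℝ) - (m.1 + 1) - 1 / 2) / n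
        = Real.pi * ((2*(J - (m.1:ℤ)) - 1 : ℤ) : ℝ) / (2*n) := by rw [hJ]; push_cast; ring
    have hvm : Complex.exp (2 * (Real.pi:ℂ) * Complex.I * ((m.1:ℂ) + 1) * ((k.1:ℂ) + 1) / (n:ℂ))
        = Stmt3Aux.ε n ^ (2*(((m.1:ℤ)+1)*K)) := by
      rw [Stmt3Aux.eps_zpow]; congr 1; rw [hKdef]; push_cast; ring
    rw [hΛ j m, hv m, harg1, harg2, Complex.ofReal_div, Complex.ofReal_sub,
      Stmt3Aux.cot_eq hn0 _ ⟨J - m.1, by ring⟩, Stmt3Aux.cot_eq hn0 _ ⟨J - m.1 - 1, by ring⟩,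
      hvm]
    have h₁ := Stmt3Aux.expand (n := n) (2*(J - (m.1:ℤ)) + 1) (((m.1:ℤ)+1)*K)
    have h₂ := Stmt3Aux.expand (n := n) (2*(J - (m.1:ℤ)) - 1) (((m.1:ℤ)+1)*K)
    calc (-Complex.I/2 * ((Stmt3Aux.ε n ^ (2*(J - (m.1:ℤ)) + 1) + 1) * ∑ t ∈ range n, (Stmt3Aux.ε n ^ (2*(J - (m.1:ℤ)) + 1)) ^ t)
            - -Complex.I/2 * ((Stmt3Aux.ε n ^ (2*(J - (m.1:ℤ)) - 1) + 1) * ∑ t ∈ range n, (Stmt3Aux.ε n ^ (2*(J - (m.1:ℤ)) - 1)) ^ t)) / (n:ℂ)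
            * Stmt3Aux.ε n ^ (2*(((m.1:ℤ)+1)*K))
        = 1/(n:ℂ) * (-Complex.I/2) *
            ((Stmt3Aux.ε n ^ (2*(J - (m.1:ℤ)) + 1) + 1) * (∑ t ∈ range n, (Stmt3Aux.ε n ^ (2*(J - (m.1:ℤ)) + 1)) ^ t) * Stmt3Aux.ε n ^ (2*(((m.1:ℤ)+1)*K))
             - (Stmt3Aux.ε n ^ (2*(J - (m.1:ℤ)) - 1) + 1) * (∑ t ∈ range n, (Stmt3Aux.ε n ^ (2*(J - (m.1:ℤ)) - 1)) ^ t) * Stmt3Aux.ε n ^ (2*(((m.1:ℤ)+1)*K))) := by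
          ring
      _ = 1/(n:ℂ) * (-Complex.I/2) *
            ((∑ t ∈ range n, (Stmt3Aux.ε n ^ ((2*(J - (m.1:ℤ)) + 1) * ((t:ℤ)+1) + 2*(((m.1:ℤ)+1)*K)) + Stmt3Aux.ε n ^ ((2*(J - (m.1:ℤ)) + 1) * (t:ℤ) + 2*(((m.1:ℤ)+1)*K))))
             - (∑ t ∈ range n, (Stmt3Aux.ε n ^ ((2*(J - (m.1:ℤ)) - 1) * ((t:ℤ)+1) + 2*(((m.1:ℤ)+1)*K)) + Stmt3Aux.ε n ^ ((2*(J - (m.1:ℤ)) - 1) * (t:ℤ) + 2*(((m.1:ℤ)+1)*K))))) := by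
          rw [h₁, h₂]
      _ = 1/(n:ℂ) * (-Complex.I/2) * ∑ t ∈ range n,
            (Stmt3Aux.ε n ^ ((2*J+1)*((t:ℤ)+1) + 2*K) * Stmt3Aux.ε n ^ (2*(K-(t:ℤ)-1)*(m.1:ℤ))
             + Stmt3Aux.ε n ^ ((2*J+1)*(t:ℤ) + 2*K) * Stmt3Aux.ε n ^ (2*(K-(t:ℤ))*(m.1:ℤ))
             - Stmt3Aux.ε n ^ ((2*J-1)*((t:ℤ)+1) + 2*K) * Stmt3Aux.ε n ^ (2*(K-(t:ℤ)-1)*(m.1:ℤ))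
             - Stmt3Aux.ε n ^ ((2*J-1)*(t:ℤ) + 2*K) * Stmt3Aux.ε n ^ (2*(K-(t:ℤ))*(m.1:ℤ))) := by
          rw [← Finset.sum_sub_distrib]
          congr 1
          refine Finset.sum_congr rfl fun t ht => ?_
          rw [← Stmt3Aux.eps_add, ← Stmt3Aux.eps_add, ← Stmt3Aux.eps_add, ← Stmt3Aux.eps_add,
            show (2*J+1)*((t:ℤ)+1) + 2*K + 2*(K-(t:ℤ)-1)*(m.1:ℤ) = (2*(J - (m.1:ℤ)) + 1) * ((t:ℤ)+1) + 2*(((m.1:ℤ)+1)*K) by ring,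
            show (2*J+1)*(t:ℤ) + 2*K + 2*(K-(t:ℤ))*(m.1:ℤ) = (2*(J - (m.1:ℤ)) + 1) * (t:ℤ) + 2*(((m.1:ℤ)+1)*K) by ring,
            show (2*J-1)*((t:ℤ)+1) + 2*K + 2*(K-(t:ℤ)-1)*(m.1:ℤ) = (2*(J - (m.1:ℤ)) - 1) * ((t:ℤ)+1) + 2*(((m.1:ℤ)+1)*K) by ring,
            show (2*J-1)*(t:ℤ) + 2*K + 2*(K-(t:ℤ))*(m.1:ℤ) = (2*(J - (m.1:ℤ)) - 1) * (t:ℤ) + 2*(((m.1:ℤ)+1)*K) by ring]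
          ring
  have hsum : ∀ b : ℤ, ∑ m : Fin n, E ^ (2*b*(m.1:ℤ)) = if (n:ℤ) ∣ b then (n:ℂ) else 0 := by
    intro b
    rw [hE, ← Stmt3Aux.geom hn0 b]
    exact Fin.sum_univ_eq_sum_range (fun i : ℕ => Stmt3Aux.ε n ^ (2*b*(i:ℤ))) n
  have hdvd1 : ∀ t ∈ range n, ((n:ℤ) ∣ (K - (t:ℤ) - 1) ↔ t = k.1) := by
    intro t ht
    rw [mem_range] at ht
    have hk1 := k.2
    constructor
    · intro h
      have h0 : (K - (t:ℤ) - 1) = 0 :=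
        Int.eq_zero_of_abs_lt_dvd h (abs_lt.mpr ⟨by omega, by omega⟩)
      omega
    · rintro rfl
      have : K - (k.1:ℤ) - 1 = 0 := by omega
      rw [this]
      exact dvd_zero _
  -- expand the mulVec entry
  show ∑ m, Λ j m * v m = _
  rw [Finset.sum_congr rfl (fun m _ => key m), ← Finset.mul_sum, Finset.sum_comm]
  simp only [Finset.sum_add_distrib, Finset.sum_sub_distrib, ← Finset.mul_sum, hsum]
  rw [Pi.smul_apply, smul_eq_mul, hv j]
  simp only [hE]
  have collapse1 : ∀ g : ℕ → ℂ,
      ∑ x ∈ range n, (g x * if (n:ℤ) ∣ K - (x:ℤ) - 1 then (n:ℂ) else 0) = g k.1 * n := by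
    intro g
    rw [Finset.sum_congr rfl (fun t ht => by
        rw [if_congr (hdvd1 t ht) rfl rfl, mul_ite, mul_zero]),
      Finset.sum_ite_eq' (range n) k.1 (fun t => g t * (n:ℂ)), if_pos (mem_range.mpr k.2)]
  have hvj : Complex.exp (2 * (Real.pi:ℂ) * Complex.I * ((j.1:ℂ) + 1) * ((k.1:ℂ) + 1) / (n:ℂ))
      = Stmt3Aux.ε n ^ (2*((J+1)*K)) := by
    rw [Stmt3Aux.eps_zpow]; congr 1; rw [hJ, hKdef]; push_cast; ring
  by_cases hKn : k.1 + 1 = n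
  · -- K = n : eigenvalue is 0
    have hKN : K = (n:ℤ) := by rw [hKdef]; omega
    have hdvd2 : ∀ t ∈ range n, ((n:ℤ) ∣ (K - (t:ℤ)) ↔ t = 0) := by
      intro t ht
      rw [mem_range] at ht
      constructor
      · intro h
        have h' : (n:ℤ) ∣ (K - (t:ℤ) - n) := dvd_sub h (dvd_refl _)
        have h0 : K - (t:ℤ) - n = 0 :=
          Int.eq_zero_of_abs_lt_dvd h' (abs_lt.mpr ⟨by omega, by omega⟩)
        omega
      · rintro rfl
        have h0 : K - ((0:ℕ):ℤ) = (n:ℤ) := by push_cast; omega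
        rw [h0]
    have collapse2 : ∀ g : ℕ → ℂ,
        ∑ x ∈ range n, (g x * if (n:ℤ) ∣ K - (x:ℤ) then (n:ℂ) else 0) = g 0 * n := by
      intro g
      rw [Finset.sum_congr rfl (fun t ht => by
          rw [if_congr (hdvd2 t ht) rfl rfl, mul_ite, mul_zero]),
        Finset.sum_ite_eq' (range n) 0 (fun t => g t * (n:ℂ)), if_pos (mem_range.mpr hn0)]
    simp only [collapse1, collapse2]
    have hsin0 : Real.sin (Real.pi * ((k.1:ℝ) + 1) / n) = 0 := by
      have hc : ((k.1:ℝ) + 1) = (n:ℝ) := by exact_mod_cast hKn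
      rw [hc, mul_div_assoc, div_self (by positivity : (n:ℝ) ≠ 0), mul_one, Real.sin_pi]
    rw [hsin0,
      show (2*J+1)*((k.1:ℤ)+1) + 2*K = (2*J+3) * (n:ℤ) by rw [← hKdef, hKN]; ring,
      show (2*J-1)*((k.1:ℤ)+1) + 2*K = (2*J+1) * (n:ℤ) by rw [← hKdef, hKN]; ring,
      show (2*J+1)*(((0:ℕ)):ℤ) + 2*K = 2*K by push_cast; ring,
      show (2*J-1)*(((0:ℕ)):ℤ) + 2*K = 2*K by push_cast; ring,
      Stmt3Aux.eps_odd_mul_n hn0 ⟨J+1, by ring⟩,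
      Stmt3Aux.eps_odd_mul_n hn0 ⟨J, by ring⟩]
    norm_num
  · -- K < n
    have hmem2 : k.1 + 1 ∈ range n := mem_range.mpr (by omega)
    have hdvd2 : ∀ t ∈ range n, ((n:ℤ) ∣ (K - (t:ℤ)) ↔ t = k.1 + 1) := by
      intro t ht
      rw [mem_range] at ht
      have hk1 := k.2
      constructor
      · intro h
        have h0 : K - (t:ℤ) = 0 :=
          Int.eq_zero_of_abs_lt_dvd h (abs_lt.mpr ⟨by omega, by omega⟩)
        omega
      · rintro rfl
        have h0 : K - ((k.1+1:ℕ):ℤ) = 0 := by push_cast; omega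
        rw [h0]
        exact dvd_zero _
    have collapse2 : ∀ g : ℕ → ℂ,
        ∑ x ∈ range n, (g x * if (n:ℤ) ∣ K - (x:ℤ) then (n:ℂ) else 0) = g (k.1+1) * n := by
      intro g
      rw [Finset.sum_congr rfl (fun t ht => by
          rw [if_congr (hdvd2 t ht) rfl rfl, mul_ite, mul_zero]),
        Finset.sum_ite_eq' (range n) (k.1+1) (fun t => g t * (n:ℂ)), if_pos hmem2]
    simp only [collapse1, collapse2]
    have hsin : ((2 * Real.sin (Real.pi * ((k.1:ℝ) + 1) / n) : ℝ) : ℂ)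
        = Complex.I * (Stmt3Aux.ε n ^ (-K) - Stmt3Aux.ε n ^ K) := by
      have e1 : Complex.exp (-(((Real.pi * ((k.1:ℝ)+1)/n : ℝ):ℂ)) * Complex.I)
          = Stmt3Aux.ε n ^ (-K) := by
        rw [Stmt3Aux.eps_zpow]; congr 1; rw [hKdef]; push_cast; ring
      have e2 : Complex.exp ((((Real.pi * ((k.1:ℝ)+1)/n : ℝ):ℂ)) * Complex.I)
          = Stmt3Aux.ε n ^ K := by
        rw [Stmt3Aux.eps_zpow]; congr 1; rw [hKdef]; push_cast; ring
      rw [Complex.ofReal_mul, Complex.ofReal_sin]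
      simp only [Complex.sin]
      rw [e1, e2]
      push_cast
      ring
    rw [hvj, hsin,
      show (2*J+1)*((k.1:ℤ)+1) + 2*K = 2*((J+1)*K) + K by rw [← hKdef]; ring,
      show (2*J+1)*(((k.1+1:ℕ)):ℤ) + 2*K = 2*((J+1)*K) + K by push_cast; rw [← hKdef]; ring,
      show (2*J-1)*((k.1:ℤ)+1) + 2*K = 2*((J+1)*K) + (-K) by rw [← hKdef]; ring,
      show (2*J-1)*(((k.1+1:ℕ)):ℤ) + 2*K = 2*((J+1)*K) + (-K) by push_cast; rw [← hKdef]; ring,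
      Stmt3Aux.eps_add n (2*((J+1)*K)) K, Stmt3Aux.eps_add n (2*((J+1)*K)) (-K)]
    field_simp
    ring
end

section
/- Let n ≥ 2 and Λ_{j,k} = (cot(π(j-k+1/2)/n) - cot(π(j-k-1/2)/n))/n. Then Λ_{j,k} < 0 whenever j ≢ k (mod n), and Λ_{j,j} > 0. -/
open Real

lemma my_cot_add_pi (x : ℝ) : Real.cot (x + Real.pi) = Real.cot x := by
  simp [Real.cot_eq_cos_div_sin, Real.sin_add_pi, Real.cos_add_pi, neg_div_neg_eq]

lemma my_cot_neg (x : ℝ) : Real.cot (-x) = -Real.cot x := by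
  rw [Real.cot_eq_cos_div_sin, Real.cot_eq_cos_div_sin, Real.cos_neg, Real.sin_neg, div_neg]

lemma my_cot_lt_cot {a b : ℝ} (ha : 0 < a) (hb : b < Real.pi) (hab : a < b) :
    Real.cot b < Real.cot a := by
  have hsa : 0 < Real.sin a := Real.sin_pos_of_pos_of_lt_pi ha (hab.trans hb)
  have hsb : 0 < Real.sin b := Real.sin_pos_of_pos_of_lt_pi (ha.trans hab) hb
  have h : Real.cot a - Real.cot b = Real.sin (b - a) / (Real.sin a * Real.sin b) := by
    rw [Real.cot_eq_cos_div_sin, Real.cot_eq_cos_div_sin, Real.sin_sub]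
    field_simp
  have hpos : 0 < Real.sin (b - a) :=
    Real.sin_pos_of_pos_of_lt_pi (by linarith) (by linarith)
  have := div_pos hpos (mul_pos hsa hsb)
  linarith

lemma key (n : ℕ) (hn : 2 ≤ n) (d : ℝ) (h1 : 1 ≤ d) (h2 : d ≤ (n : ℝ) - 1) :
    Real.cot (Real.pi * (d + 1 / 2) / n) < Real.cot (Real.pi * (d - 1 / 2) / n) := by
  have hn0 : (0 : ℝ) < n := by positivity
  have hpi := Real.pi_pos
  apply my_cot_lt_cot
  · exact div_pos (by nlinarith) hn0
  · rw [div_lt_iff₀ hn0]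
    nlinarith
  · rw [div_lt_div_iff₀ hn0 hn0]
    nlinarith

theorem stmt_7 (n : ℕ) (hn : 2 ≤ n)
    (Λ : Matrix (Fin n) (Fin n) ℝ)
    (hΛ : ∀ j k : Fin n, Λ j k =
      (Real.cot (Real.pi * ((j.1 + 1 : ℝ) - (k.1 + 1) + 1 / 2) / n)
        - Real.cot (Real.pi * ((j.1 + 1 : ℝ) - (k.1 + 1) - 1 / 2) / n)) / n) :
    (∀ j k : Fin n, j ≠ k → Λ j k < 0) ∧ (∀ j : Fin n, 0 < Λ j j) := by
  have hn0 : (0 : ℝ) < n := by positivity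
  have hpi := Real.pi_pos
  constructor
  · intro j k hjk
    rw [hΛ]
    set d : ℝ := (j.1 + 1 : ℝ) - (k.1 + 1) with hd
    have hdd : d = (j.1 : ℝ) - k.1 := by ring
    have hne : (j.1 : ℝ) ≠ (k.1 : ℝ) := by
      exact_mod_cast fun h => hjk (Fin.ext h)
    have hjlt : (j.1 : ℝ) < n := by exact_mod_cast j.2
    have hklt : (k.1 : ℝ) < n := by exact_mod_cast k.2
    apply div_neg_of_neg_of_pos _ hn0
    rcases lt_or_gt_of_ne hne with h | h
    · -- j < k, d ≤ -1, use periodicity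
      have hji : j.1 < k.1 := by exact_mod_cast h
      have h1 : d ≤ -1 := by
        rw [hdd]
        have : (j.1 : ℝ) + 1 ≤ k.1 := by exact_mod_cast hji
        linarith
      have h2 : -((n : ℝ) - 1) ≤ d := by
        have hj0 : (0 : ℝ) ≤ j.1 := Nat.cast_nonneg _
        have hk1 : (k.1 : ℝ) + 1 ≤ n := by exact_mod_cast k.2
        rw [hdd]; linarith
      have e1 : Real.pi * (d + 1 / 2) / n + Real.pi = Real.pi * ((d + n) + 1 / 2) / n := by
        field_simp; ring
      have e2 : Real.pi * (d - 1 / 2) / n + Real.pi = Real.pi * ((d + n) - 1 / 2) / n := by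
        field_simp; ring
      have := key n hn (d + n) (by linarith) (by linarith)
      rw [← e1, ← e2, my_cot_add_pi, my_cot_add_pi] at this
      linarith
    · have hji : k.1 < j.1 := by exact_mod_cast h
      have h1 : 1 ≤ d := by
        rw [hdd]
        have : (k.1 : ℝ) + 1 ≤ j.1 := by exact_mod_cast hji
        linarith
      have h2 : d ≤ (n : ℝ) - 1 := by
        have hk0 : (0 : ℝ) ≤ k.1 := Nat.cast_nonneg _
        have hj1 : (j.1 : ℝ) + 1 ≤ n := by exact_mod_cast j.2
        rw [hdd]; linarith
      have := key n hn d h1 h2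
      linarith
  · intro j
    rw [hΛ]
    have e0 : ((j.1 + 1 : ℝ) - (j.1 + 1)) = 0 := by ring
    rw [e0]
    have e1 : Real.pi * (0 - 1 / 2) / n = -(Real.pi * (0 + 1 / 2) / n) := by ring
    rw [e1, my_cot_neg]
    have hx : 0 < Real.pi * (0 + 1 / 2) / n := by positivity
    have hn2 : (2 : ℝ) ≤ n := by exact_mod_cast hn
    have hx2 : Real.pi * (0 + 1 / 2) / n < Real.pi / 2 := by
      rw [div_lt_div_iff₀ hn0 two_pos]
      nlinarith
    have hc : 0 < Real.cot (Real.pi * (0 + 1 / 2) / n) := by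
      rw [Real.cot_eq_cos_div_sin]
      apply div_pos (Real.cos_pos_of_mem_Ioo ⟨by linarith [Real.pi_div_two_pos], hx2⟩)
        (Real.sin_pos_of_pos_of_lt_pi hx (by linarith))
    have e2 : Real.cot (Real.pi * (0 + 1 / 2) / n) - -Real.cot (Real.pi * (0 + 1 / 2) / n)
        = 2 * Real.cot (Real.pi * (0 + 1 / 2) / n) := by ring
    rw [e2]
    positivity
end

section
/- Let n ≥ 2, ζ = exp(iπ/n), and 1 ≤ j,k ≤ n. Then (1/(i·n))·∑_{ℓ=1}^{n} ζ^{2jℓ}(ζ^ℓ - ζ^{-ℓ})ζ^{-2ℓk} = (cot(π(j-k+1/2)/n) - cot(π(j-k-1/2)/n))/n. -/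
open Finset Complex

lemma ne_one_aux (α : ℝ) (hs : Real.sin α ≠ 0) :
    Complex.exp (2 * α * Complex.I) ≠ 1 := by
  intro h
  rw [Complex.exp_eq_one_iff] at h
  obtain ⟨k, hk⟩ := h
  have h2 : (2 * (α : ℂ)) = k * (2 * Real.pi) := by
    apply mul_right_cancel₀ Complex.I_ne_zero
    linear_combination hk
  have h3 : (2 * α : ℝ) = k * (2 * Real.pi) := by exact_mod_cast h2
  apply hs
  have : α = (k : ℝ) * Real.pi := by linarith
  rw [this]
  exact Real.sin_int_mul_pi k

lemma cot_aux (α : ℝ) (hs : Real.sin α ≠ 0) :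
    (-2 : ℂ) * Complex.exp (2 * α * Complex.I) / (Complex.exp (2 * α * Complex.I) - 1)
      = -1 + Complex.I * Real.cot α := by
  have hsC : Complex.sin α ≠ 0 := by
    rw [← Complex.ofReal_sin]; exact_mod_cast hs
  have he : Complex.exp (2 * α * Complex.I) = (Complex.cos α + Complex.sin α * Complex.I) ^ 2 := by
    rw [← Complex.exp_mul_I, ← Complex.exp_nat_mul]
    ring_nf
  have hw1 : Complex.exp (2 * α * Complex.I) - 1
      = 2 * Complex.sin α * Complex.I * (Complex.cos α + Complex.sin α * Complex.I) := by
    rw [he]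
    have hp := Complex.sin_sq_add_cos_sq (α : ℂ)
    linear_combination hp - Complex.sin (α : ℂ) ^ 2 * Complex.I_sq
  have hne : Complex.exp (2 * α * Complex.I) - 1 ≠ 0 := by
    rw [hw1]
    have h2 : Complex.cos α + Complex.sin α * Complex.I ≠ 0 := by
      rw [← Complex.exp_mul_I]; exact Complex.exp_ne_zero _
    simp [hsC, h2, Complex.I_ne_zero]
  rw [Complex.ofReal_cot, Complex.cot_eq_cos_div_sin]
  rw [div_eq_iff hne, hw1, he]
  field_simp
  linear_combination (-(Complex.cos (α:ℂ) * Complex.sin (α:ℂ) * Complex.I)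
    - Complex.cos (α:ℂ) ^ 2) * Complex.I_sq

lemma key_s9 (n : ℕ) (hn : 2 ≤ n) (t : ℤ) (ht : Odd t) :
    ∑ ℓ ∈ Finset.Icc 1 n, (Complex.exp (Real.pi * Complex.I / n)) ^ (t * (ℓ : ℤ))
      = -1 + Complex.I * Real.cot (Real.pi * t / (2 * n)) := by
  have hn0 : (n : ℝ) ≠ 0 := by positivity
  have hnC : (n : ℂ) ≠ 0 := by exact_mod_cast hn0
  set w : ℂ := Complex.exp (t * (Real.pi * Complex.I / n)) with hw
  have hζℓ : ∀ ℓ : ℕ, (Complex.exp (Real.pi * Complex.I / n)) ^ (t * (ℓ : ℤ)) = w ^ ℓ := by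
    intro ℓ
    rw [hw, Complex.exp_int_mul, ← zpow_natCast (Complex.exp (Real.pi * Complex.I / n) ^ t) ℓ,
      ← zpow_mul]
  have hα : w = Complex.exp (2 * ((Real.pi * t / (2 * n) : ℝ) : ℂ) * Complex.I) := by
    rw [hw]; congr 1
    push_cast
    field_simp
  have hsin : Real.sin (Real.pi * t / (2 * n)) ≠ 0 := by
    intro h
    rw [Real.sin_eq_zero_iff] at h
    obtain ⟨m, hm⟩ := h
    have h2 : (m : ℝ) * (2 * n) = t := by
      apply mul_right_cancel₀ Real.pi_ne_zero
      field_simp at hm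
      linear_combination Real.pi * hm
    have h3 : t = m * (2 * (n : ℤ)) := by exact_mod_cast h2.symm
    have h4 : (2 : ℤ) ∣ t := ⟨n * m, by linear_combination h3⟩
    rcases ht with ⟨s, rfl⟩
    omega
  have hwn : w ^ n = -1 := by
    rw [hw, ← Complex.exp_nat_mul,
      show (n : ℂ) * ((t : ℂ) * (Real.pi * Complex.I / n)) = t * (Real.pi * Complex.I) from by
        field_simp,
      Complex.exp_int_mul, Complex.exp_pi_mul_I]
    exact Odd.neg_one_zpow ht
  have hw1 : w ≠ 1 := by rw [hα]; exact ne_one_aux _ hsin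
  have hwne : w - 1 ≠ 0 := sub_ne_zero.mpr hw1
  have hins : Finset.range (n + 1) = insert 0 (Finset.Icc 1 n) := by
    ext x; simp [Nat.lt_succ_iff]; omega
  have hsum : ∑ ℓ ∈ Finset.Icc 1 n, w ^ ℓ = -2 * w / (w - 1) := by
    have hgeom := geom_sum_eq hw1 (n + 1)
    rw [hins, Finset.sum_insert (by simp)] at hgeom
    have : ∑ ℓ ∈ Finset.Icc 1 n, w ^ ℓ = (w ^ (n + 1) - 1) / (w - 1) - 1 := by
      rw [← hgeom]; ring
    rw [this, pow_succ, hwn]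
    field_simp
    ring
  calc ∑ ℓ ∈ Finset.Icc 1 n, (Complex.exp (Real.pi * Complex.I / n)) ^ (t * (ℓ : ℤ))
      = ∑ ℓ ∈ Finset.Icc 1 n, w ^ ℓ := Finset.sum_congr rfl fun ℓ _ => hζℓ ℓ
    _ = -2 * w / (w - 1) := hsum
    _ = -1 + Complex.I * Real.cot (Real.pi * t / (2 * n)) := by
        rw [hα]; exact cot_aux _ hsin

theorem stmt_9 (n : ℕ) (hn : 2 ≤ n)
    (ζ : ℂ) (hζ : ζ = Complex.exp (Real.pi * Complex.I / n))
    (j k : ℕ) (hj1 : 1 ≤ j) (hjn : j ≤ n) (hk1 : 1 ≤ k) (hkn : k ≤ n) :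
    (1 / (Complex.I * n)) * ∑ ℓ ∈ Finset.Icc 1 n,
        ζ ^ (2 * (j : ℤ) * ℓ) * (ζ ^ (ℓ : ℤ) - ζ ^ (-(ℓ : ℤ))) * ζ ^ (-(2 * (ℓ : ℤ) * k))
      = (((Real.cot (Real.pi * ((j : ℝ) - k + 1 / 2) / n)
          - Real.cot (Real.pi * ((j : ℝ) - k - 1 / 2) / n)) / n : ℝ) : ℂ) := by
  have hζ0 : ζ ≠ 0 := by rw [hζ]; exact Complex.exp_ne_zero _
  have hterm : ∀ ℓ ∈ Finset.Icc 1 n,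
      ζ ^ (2 * (j : ℤ) * ℓ) * (ζ ^ (ℓ : ℤ) - ζ ^ (-(ℓ : ℤ))) * ζ ^ (-(2 * (ℓ : ℤ) * k))
        = ζ ^ ((2 * (j : ℤ) - 2 * k + 1) * ℓ) - ζ ^ ((2 * (j : ℤ) - 2 * k - 1) * ℓ) := by
    intro ℓ _
    rw [mul_sub, sub_mul, ← zpow_add₀ hζ0, ← zpow_add₀ hζ0, ← zpow_add₀ hζ0, ← zpow_add₀ hζ0]
    congr 1 <;> ring_nf
  rw [Finset.sum_congr rfl hterm, Finset.sum_sub_distrib, hζ]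
  rw [key_s9 n hn _ (by exact ⟨(j:ℤ) - k, by ring⟩), key_s9 n hn _ (by exact ⟨(j:ℤ) - k - 1, by ring⟩)]
  have hn0 : (n : ℝ) ≠ 0 := by positivity
  have hnC : (n : ℂ) ≠ 0 := by exact_mod_cast hn0
  have harg1 : Real.pi * ((2 * (j:ℤ) - 2 * k + 1 : ℤ) : ℝ) / (2 * n)
      = Real.pi * ((j : ℝ) - k + 1 / 2) / n := by
    rw [div_eq_div_iff (by positivity) (by positivity)]
    push_cast
    ring
  have harg2 : Real.pi * ((2 * (j:ℤ) - 2 * k - 1 : ℤ) : ℝ) / (2 * n)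
      = Real.pi * ((j : ℝ) - k - 1 / 2) / n := by
    rw [div_eq_div_iff (by positivity) (by positivity)]
    push_cast
    ring
  rw [harg1, harg2]
  push_cast
  field_simp
  ring
end

section
/- Let n ≥ 2 and Λ_{j,k} = (cot(π(j-k+1/2)/n) - cot(π(j-k-1/2)/n))/n. Then -∑_{1 ≤ j < k ≤ n} Λ_{j,k} = cot(π/(2n)). -/
/-!
Each row `∑_{k > j} Λ_{j,k}` telescopes to `(cot (-π/(2n)) - cot (π (j - n - 1/2)/n)) / n`.
Summed over `j`, the second terms cancel: up to the period `π` of `cot`, they are `cot` at the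
nodes `π (m + 1/2)/n`, `0 ≤ m < n`, which are symmetric about `π/2`, where `cot` is odd.
What remains is `n · cot (-π/(2n)) / n = -cot (π/(2n))`.
-/

open Finset Real

namespace Real

lemma cot_neg (x : ℝ) : cot (-x) = -cot x := by
  rw [cot_eq_cos_div_sin, cot_eq_cos_div_sin, cos_neg, sin_neg, div_neg]

lemma cot_sub_pi (x : ℝ) : cot (x - π) = cot x := by
  rw [cot_eq_cos_div_sin, cot_eq_cos_div_sin, cos_sub_pi, sin_sub_pi, neg_div_neg_eq]

lemma cot_pi_sub (x : ℝ) : cot (π - x) = -cot x := by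
  rw [← neg_sub, cot_neg, cot_sub_pi]

end Real

namespace Finset

lemma sum_Ioc_sub_succ {M : Type*} [AddCommGroup M] (f : ℕ → M) {m n : ℕ} (hmn : m ≤ n) :
    ∑ i ∈ Ioc m n, (f i - f (i + 1)) = f (m + 1) - f (n + 1) := by
  rw [← Icc_add_one_left_eq_Ioc, ← Ico_add_one_right_eq_Icc, ← neg_sub (f (n + 1)),
    ← sum_Ico_sub f (by omega), ← sum_neg_distrib]
  simp only [neg_sub]

lemma sum_range_eq_zero_of_reflect_eq_neg {M : Type*} [AddCommGroup M] [IsAddTorsionFree M]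
    (f : ℕ → M) {n : ℕ} (hf : ∀ j < n, f (n - 1 - j) = -f j) : ∑ j ∈ range n, f j = 0 := by
  rw [← self_eq_neg, ← sum_neg_distrib]
  conv_lhs => rw [← sum_range_reflect]
  exact sum_congr rfl fun j hj => hf j (mem_range.1 hj)

end Finset

namespace Real

lemma sum_range_cot_pi_mul_add_half_div_eq_zero (n : ℕ) :
    ∑ m ∈ range n, cot (π * ((m : ℝ) + 1 / 2) / n) = 0 := by
  refine sum_range_eq_zero_of_reflect_eq_neg _ fun j hj => ?_
  have hn : (n : ℝ) ≠ 0 := Nat.cast_ne_zero.2 (ne_zero_of_lt hj)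
  have hnode : π * (((n - 1 - j : ℕ) : ℝ) + 1 / 2) / n = π - π * ((j : ℝ) + 1 / 2) / n := by
    rw [Nat.cast_sub (by omega), Nat.cast_sub (by omega)]
    field_simp
    ring
  rw [hnode, cot_pi_sub]

lemma sum_Ioc_cot_sub_cot (n j : ℕ) (hjn : j ≤ n) :
    ∑ k ∈ Ioc j n, (cot (π * ((j : ℝ) - k + 1 / 2) / n) - cot (π * ((j : ℝ) - k - 1 / 2) / n))
      = -cot (π / (2 * n)) - cot (π * ((j : ℝ) - n - 1 / 2) / n) := by
  set G : ℕ → ℝ := fun k => cot (π * ((j : ℝ) - k + 1 / 2) / n) with hG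
  have hGsucc : ∀ k : ℕ, cot (π * ((j : ℝ) - k - 1 / 2) / n) = G (k + 1) := fun k => by
    rw [hG]
    push_cast
    ring_nf
  have hGj : G (j + 1) = -cot (π / (2 * n)) := by
    rw [hG, ← cot_neg]
    push_cast
    ring_nf
  have hGn : G (n + 1) = cot (π * ((j : ℝ) - n - 1 / 2) / n) := by
    rw [hG]
    push_cast
    ring_nf
  simp only [hGsucc]
  rw [sum_Ioc_sub_succ G hjn, hGj, hGn]

lemma sum_Icc_cot_pi_mul_sub_half_div_eq_zero (n : ℕ) :
    ∑ j ∈ Icc 1 n, cot (π * ((j : ℝ) - n - 1 / 2) / n) = 0 := by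
  rw [← Ico_add_one_right_eq_Icc, sum_Ico_eq_sum_range, add_tsub_cancel_right,
    ← sum_range_cot_pi_mul_add_half_div_eq_zero n]
  refine sum_congr rfl fun m hm => ?_
  have hn : (n : ℝ) ≠ 0 := Nat.cast_ne_zero.2 (ne_zero_of_lt (mem_range.1 hm))
  rw [← cot_sub_pi (π * ((m : ℝ) + 1 / 2) / n)]
  congr 1
  push_cast
  field_simp
  ring

end Real

theorem stmt_11_general (n : ℕ)
    (Λ : ℕ → ℕ → ℝ)
    (hΛ : ∀ j k : ℕ, Λ j k =
      (Real.cot (Real.pi * ((j : ℝ) - k + 1 / 2) / n)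
        - Real.cot (Real.pi * ((j : ℝ) - k - 1 / 2) / n)) / n) :
    -(∑ j ∈ Finset.Icc 1 n, ∑ k ∈ Finset.Ioc j n, Λ j k)
      = Real.cot (Real.pi / (2 * n)) := by
  rcases eq_or_ne n 0 with rfl | hn
  · simp [cot_eq_cos_div_sin]
  have hn' : (n : ℝ) ≠ 0 := Nat.cast_ne_zero.2 hn
  simp only [hΛ, ← sum_div]
  rw [sum_congr rfl fun j hj => by rw [sum_Ioc_cot_sub_cot n j (mem_Icc.1 hj).2],
    sum_sub_distrib, sum_Icc_cot_pi_mul_sub_half_div_eq_zero, sum_const, Nat.card_Icc,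
    add_tsub_cancel_right, nsmul_eq_mul]
  field_simp
  ring

theorem stmt_11 (n : ℕ) (hn : 2 ≤ n)
    (Λ : ℕ → ℕ → ℝ)
    (hΛ : ∀ j k : ℕ, Λ j k =
      (Real.cot (Real.pi * ((j : ℝ) - k + 1 / 2) / n)
        - Real.cot (Real.pi * ((j : ℝ) - k - 1 / 2) / n)) / n) :
    -(∑ j ∈ Finset.Icc 1 n, ∑ k ∈ Finset.Ioc j n, Λ j k)
      = Real.cot (Real.pi / (2 * n)) :=
  stmt_11_general n Λ hΛ
end

section
/- Let n ≥ 2, let W be the n×n complex matrix with W_{j,k} = exp(2πijk/n), let D be the diagonal matrix with D_{k,k} = 2 sin(πk/n), and let Λ be the n×n matrix with Λ_{j,k} = (cot(π(j-k+1/2)/n) - cot(π(j-k-1/2)/n))/n. Then Λ = W·D·W^{-1}. -/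
open Complex Finset

lemma aux_exp_ne_one {n : ℕ} (hn : 1 ≤ n) (r : ℤ) (hr : Odd r) :
    Complex.exp (Real.pi * I * r / n) ≠ 1 := by
  intro h
  rw [Complex.exp_eq_one_iff] at h
  obtain ⟨k, hk⟩ := h
  have hn' : (n:ℂ) ≠ 0 := Nat.cast_ne_zero.2 (by omega)
  have hπ : (Real.pi:ℂ) ≠ 0 := Complex.ofReal_ne_zero.2 Real.pi_ne_zero
  have hk' : (Real.pi:ℂ) * I * r / n * n = k * (2 * Real.pi * I) * n := by rw [hk]
  rw [div_mul_cancel₀ _ hn'] at hk'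
  have h2 : (Real.pi:ℂ) * I * r = (Real.pi:ℂ) * I * (2*k*n) := by linear_combination hk'
  have h3 := mul_left_cancel₀ (mul_ne_zero hπ I_ne_zero) h2
  have h4 : r = 2*k*n := by exact_mod_cast h3
  have : Even r := ⟨k*n, by rw [h4]; ring⟩
  exact (Int.not_odd_iff_even.2 this) hr

lemma aux_exp_dvd {n : ℕ} (hn : 1 ≤ n) (d : ℤ)
    (h : Complex.exp (2 * Real.pi * I * d / n) = 1) : (n:ℤ) ∣ d := by
  rw [Complex.exp_eq_one_iff] at h
  obtain ⟨k, hk⟩ := h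
  have hn' : (n:ℂ) ≠ 0 := Nat.cast_ne_zero.2 (by omega)
  have hπ : (Real.pi:ℂ) ≠ 0 := Complex.ofReal_ne_zero.2 Real.pi_ne_zero
  have hk' : 2 * (Real.pi:ℂ) * I * d / n * n = k * (2 * Real.pi * I) * n := by rw [hk]
  rw [div_mul_cancel₀ _ hn'] at hk'
  have h2 : 2 * (Real.pi:ℂ) * I * d = 2 * (Real.pi:ℂ) * I * (k*n) := by linear_combination hk'
  have h3 := mul_left_cancel₀ (mul_ne_zero (mul_ne_zero two_ne_zero hπ) I_ne_zero) h2
  have h4 : d = k*n := by exact_mod_cast h3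
  exact ⟨k, by rw [h4, mul_comm]⟩

lemma aux_geom {n : ℕ} (a : ℂ) (ha : a ≠ 1) (han : a ^ n = -1) :
    ∑ m ∈ range n, a ^ (m+1) = -2 * a / (a - 1) := by
  have h1 : ∑ m ∈ range n, a ^ (m+1) = a * ∑ m ∈ range n, a ^ m := by
    rw [Finset.mul_sum]
    exact Finset.sum_congr rfl fun m _ => by ring
  rw [h1, geom_sum_eq ha, han]
  have : a - 1 ≠ 0 := sub_ne_zero.2 ha
  field_simp
  ring

lemma aux_geom0 {n : ℕ} (a : ℂ) (ha : a ≠ 1) (han : a ^ n = 1) :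
    ∑ m ∈ range n, a ^ (m+1) = 0 := by
  have h1 : ∑ m ∈ range n, a ^ (m+1) = a * ∑ m ∈ range n, a ^ m := by
    rw [Finset.mul_sum]
    exact Finset.sum_congr rfl fun m _ => by ring
  rw [h1, geom_sum_eq ha, han]
  simp

lemma aux_cot (θ : ℂ) (h : Complex.exp (2*θ*I) ≠ 1) :
    Complex.cot θ = I * (Complex.exp (2*θ*I) + 1) / (Complex.exp (2*θ*I) - 1) := by
  have hu : Complex.exp (θ*I) ≠ 0 := Complex.exp_ne_zero _
  have h2 : Complex.exp (2*θ*I) = Complex.exp (θ*I) ^ 2 := by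
    rw [← Complex.exp_nat_mul]; ring_nf
  have hne : Complex.exp (2*θ*I) - 1 ≠ 0 := sub_ne_zero.2 h
  have hsin : Complex.sin θ ≠ 0 := by
    intro hc
    rw [Complex.sin_eq_zero_iff] at hc
    obtain ⟨k, rfl⟩ := hc
    apply h
    have : 2 * ((k:ℂ) * Real.pi) * I = k * (2 * Real.pi * I) := by ring
    rw [this, Complex.exp_int_mul_two_pi_mul_I]
  rw [Complex.cot, div_eq_div_iff hsin hne, Complex.sin, Complex.cos, h2,
    neg_mul, Complex.exp_neg]
  field_simp
  linear_combination (Complex.exp (θ*I)^4 - 1) * Complex.I_sq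

lemma aux_core {n : ℕ} (hn : 2 ≤ n) (s : ℤ) :
    ∑ m ∈ range n, 2 * Complex.sin (Real.pi * (m+1) / n)
        * Complex.exp (2 * Real.pi * I * s * (m+1) / n)
      = Complex.cot (Real.pi * (2*s+1) / (2*n)) - Complex.cot (Real.pi * (2*s-1) / (2*n)) := by
  have hn' : (n:ℂ) ≠ 0 := Nat.cast_ne_zero.2 (by omega)
  set a : ℂ := Complex.exp (Real.pi * I * (2*s+1) / n) with ha_def
  set b : ℂ := Complex.exp (Real.pi * I * (2*s-1) / n) with hb_def
  have ha1 : a ≠ 1 := by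
    have := aux_exp_ne_one (n := n) (by omega) (2*s+1) ⟨s, by ring⟩
    rw [ha_def]; convert this using 3; push_cast; ring
  have hb1 : b ≠ 1 := by
    have := aux_exp_ne_one (n := n) (by omega) (2*s-1) ⟨s-1, by ring⟩
    rw [hb_def]; convert this using 3; push_cast; ring
  have hexp_pow : ∀ (c : ℂ), (Complex.exp c) ^ n = Complex.exp (n * c) := by
    intro c; rw [← Complex.exp_nat_mul]
  have han : a ^ n = -1 := by
    rw [ha_def, hexp_pow]
    have : (n:ℂ) * (Real.pi * I * (2*s+1) / n) = s * (2*Real.pi*I) + Real.pi*I := by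
      field_simp
    rw [this, Complex.exp_add, Complex.exp_int_mul_two_pi_mul_I, one_mul,
      Complex.exp_pi_mul_I]
  have hbn : b ^ n = -1 := by
    rw [hb_def, hexp_pow]
    have : (n:ℂ) * (Real.pi * I * (2*s-1) / n) = s * (2*Real.pi*I) - Real.pi*I := by
      field_simp
    rw [this, Complex.exp_sub, Complex.exp_int_mul_two_pi_mul_I, Complex.exp_pi_mul_I]
    norm_num
  have hterm : ∀ m ∈ range n, 2 * Complex.sin (Real.pi * (m+1) / n)
        * Complex.exp (2 * Real.pi * I * s * (m+1) / n)
      = (b ^ (m+1) - a ^ (m+1)) * I := by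
    intro m _
    have hA : Complex.exp ((Real.pi * (m+1) / n : ℂ) * I)
        * Complex.exp (2 * Real.pi * I * s * (m+1) / n) = a ^ (m+1) := by
      rw [ha_def, ← Complex.exp_add, ← Complex.exp_nat_mul]
      congr 1
      push_cast
      field_simp
      ring
    have hB : Complex.exp (-(Real.pi * (m+1) / n : ℂ) * I)
        * Complex.exp (2 * Real.pi * I * s * (m+1) / n) = b ^ (m+1) := by
      rw [hb_def, ← Complex.exp_add, ← Complex.exp_nat_mul]
      congr 1
      push_cast
      field_simp
      ring
    rw [Complex.sin]
    linear_combination I * hB - I * hA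
  rw [Finset.sum_congr rfl hterm]
  have hsplit : ∑ m ∈ range n, (b ^ (m+1) - a ^ (m+1)) * I
      = ((∑ m ∈ range n, b ^ (m+1)) - ∑ m ∈ range n, a ^ (m+1)) * I := by
    simp [Finset.sum_sub_distrib, sub_mul, Finset.sum_mul]
  rw [hsplit, aux_geom a ha1 han, aux_geom b hb1 hbn]
  have hca : Complex.cot (Real.pi * (2*s+1) / (2*n)) = I * (a + 1) / (a - 1) := by
    have harg : Complex.exp (2 * ((Real.pi:ℂ) * (2*s+1) / (2*n)) * I) = a := by
      rw [ha_def]; congr 1; field_simp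
    rw [aux_cot _ (by rw [harg]; exact ha1), harg]
  have hcb : Complex.cot (Real.pi * (2*s-1) / (2*n)) = I * (b + 1) / (b - 1) := by
    have harg : Complex.exp (2 * ((Real.pi:ℂ) * (2*s-1) / (2*n)) * I) = b := by
      rw [hb_def]; congr 1; field_simp
    rw [aux_cot _ (by rw [harg]; exact hb1), harg]
  rw [hca, hcb]
  have hA0 : a - 1 ≠ 0 := sub_ne_zero.2 ha1
  have hB0 : b - 1 ≠ 0 := sub_ne_zero.2 hb1
  field_simp
  ring

lemma aux_WV (n : ℕ) (hn : 2 ≤ n)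
    (W : Matrix (Fin n) (Fin n) ℂ)
    (hW : ∀ j k : Fin n, W j k =
      Complex.exp (2 * Real.pi * Complex.I * (j.1 + 1) * (k.1 + 1) / n)) :
    W * (Matrix.of fun m k : Fin n =>
      Complex.exp (-(2 * Real.pi * I * (m.1+1) * (k.1+1)) / n) / n) = 1 := by
  have hn0 : (n:ℂ) ≠ 0 := Nat.cast_ne_zero.2 (by omega)
  ext j k
  rw [Matrix.mul_apply]
  set d : ℤ := (j.1:ℤ) - (k.1:ℤ) with hd
  set ζ : ℂ := Complex.exp (2 * Real.pi * I * d / n) with hζ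
  have key : ∀ m : Fin n, W j m * (Complex.exp (-(2 * Real.pi * I * (m.1+1) * (k.1+1)) / n) / n)
      = ζ ^ (m.1+1) / n := by
    intro m
    rw [hW, hζ, ← Complex.exp_nat_mul]
    have comb : ∀ A B : ℂ, Complex.exp A * (Complex.exp B / n) = Complex.exp (A + B) / n := by
      intro A B; rw [Complex.exp_add]; ring
    rw [comb]
    congr 2
    rw [hd]
    push_cast
    field_simp
    ring
  have hsum : ∑ m : Fin n, W j m * Matrix.of (fun m k : Fin n =>
      Complex.exp (-(2 * Real.pi * I * (m.1+1) * (k.1+1)) / n) / n) m k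
      = (∑ m ∈ range n, ζ ^ (m+1)) / n := by
    simp only [Matrix.of_apply]
    rw [Finset.sum_congr rfl (fun m _ => key m),
      Fin.sum_univ_eq_sum_range (fun m => ζ ^ (m+1) / n), ← Finset.sum_div]
  rw [hsum]
  by_cases hjk : j = k
  · subst hjk
    have : ζ = 1 := by rw [hζ, hd]; simp
    rw [this]
    simp only [one_pow, Finset.sum_const, Finset.card_range, nsmul_eq_mul, mul_one,
      Matrix.one_apply_eq]
    exact div_self hn0
  · have hd0 : d ≠ 0 := by
      simp only [hd, sub_ne_zero]
      exact_mod_cast fun h => hjk (Fin.ext (by exact_mod_cast h))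
    have hζ1 : ζ ≠ 1 := by
      intro h
      have hdvd := aux_exp_dvd (by omega) d h
      have habs : |d| < (n:ℤ) := by
        have hj := j.2; have hk := k.2
        rw [hd, abs_lt]; omega
      exact hd0 (Int.eq_zero_of_abs_lt_dvd hdvd habs)
    have hζn : ζ ^ n = 1 := by
      rw [hζ, ← Complex.exp_nat_mul]
      have : (n:ℂ) * (2 * Real.pi * I * d / n) = d * (2 * Real.pi * I) := by
        field_simp
      rw [this, Complex.exp_int_mul_two_pi_mul_I]
    rw [aux_geom0 ζ hζ1 hζn, Matrix.one_apply_ne hjk, zero_div]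

theorem stmt_17 (n : ℕ) (hn : 2 ≤ n)
    (W : Matrix (Fin n) (Fin n) ℂ)
    (hW : ∀ j k : Fin n, W j k =
      Complex.exp (2 * Real.pi * Complex.I * (j.1 + 1) * (k.1 + 1) / n))
    (D : Matrix (Fin n) (Fin n) ℂ)
    (hD : D = Matrix.diagonal fun k : Fin n => ((2 * Real.sin (Real.pi * (k.1 + 1) / n) : ℝ) : ℂ))
    (Λ : Matrix (Fin n) (Fin n) ℂ)
    (hΛ : ∀ j k : Fin n, Λ j k =
      (((Real.cot (Real.pi * ((j.1 + 1 : ℝ) - (k.1 + 1) + 1 / 2) / n)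
        - Real.cot (Real.pi * ((j.1 + 1 : ℝ) - (k.1 + 1) - 1 / 2) / n)) / n : ℝ) : ℂ)) :
    Λ = W * D * W⁻¹ := by
  have hn0 : (n:ℂ) ≠ 0 := Nat.cast_ne_zero.2 (by omega)
  have hnR : (n:ℝ) ≠ 0 := Nat.cast_ne_zero.2 (by omega)
  have hWinv : W⁻¹ = Matrix.of fun m k : Fin n =>
      Complex.exp (-(2 * Real.pi * I * (m.1+1) * (k.1+1)) / n) / n :=
    Matrix.inv_eq_right_inv (aux_WV n hn W hW)
  ext j k
  rw [hΛ, hWinv, hD, Matrix.mul_apply]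
  simp only [Matrix.mul_diagonal, Matrix.of_apply]
  set s : ℤ := (j.1:ℤ) - (k.1:ℤ) with hs
  have key : ∀ m : Fin n, W j m * ((2 * Real.sin (Real.pi * (m.1+1) / n) : ℝ) : ℂ)
      * (Complex.exp (-(2 * Real.pi * I * (m.1+1) * (k.1+1)) / n) / n)
      = (2 * Complex.sin (Real.pi * (m.1+1) / n)
          * Complex.exp (2 * Real.pi * I * s * (m.1+1) / n)) / n := by
    intro m
    rw [hW]
    have comb : ∀ (A B S : ℂ), Complex.exp A * S * (Complex.exp B / n)
        = S * Complex.exp (A + B) / n := by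
      intro A B S; rw [Complex.exp_add]; ring
    rw [comb]
    have harg : 2 * (Real.pi:ℂ) * I * (j.1+1) * (m.1+1) / n
        + -(2 * Real.pi * I * (m.1+1) * (k.1+1)) / n
        = 2 * Real.pi * I * s * (m.1+1) / n := by
      rw [hs]; push_cast; field_simp; ring
    rw [harg]
    push_cast
    ring
  rw [Finset.sum_congr rfl (fun m _ => key m),
    Fin.sum_univ_eq_sum_range
      (fun m => (2 * Complex.sin (Real.pi * (m+1) / n)
        * Complex.exp (2 * Real.pi * I * s * (m+1) / n)) / n),
    ← Finset.sum_div, aux_core hn s]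
  have e1 : ((Real.pi * ((j.1 + 1 : ℝ) - (k.1 + 1) + 1 / 2) / n : ℝ) : ℂ)
      = (Real.pi:ℂ) * (2*(s:ℂ)+1) / (2*n) := by
    rw [hs]; push_cast; field_simp; ring
  have e2 : ((Real.pi * ((j.1 + 1 : ℝ) - (k.1 + 1) - 1 / 2) / n : ℝ) : ℂ)
      = (Real.pi:ℂ) * (2*(s:ℂ)-1) / (2*n) := by
    rw [hs]; push_cast; field_simp; ring
  rw [Complex.ofReal_div, Complex.ofReal_sub, Complex.ofReal_cot, Complex.ofReal_cot,
    e1, e2, Complex.ofReal_natCast]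
end
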